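/- arXiv:1410.1209 — 10 statements merged into one kernel-verified Lean document; each statement's English description precedes it below -/
import Mathlib

section
/- A finite poset (S, <) is width-extensible if and only if for every antichain A of S with |A| ≤ 2 there exists a width-antichain W of S with A ⊆ W. -/
open scoped Classical

/-- Two elements of a poset are *incomparable*: they are distinct and neither
is strictly below the other. -/
def Incomp {α : Type*} [PartialOrder α] (a b : α) : Prop :=
  a ≠ b ∧ ¬ a < b ∧ ¬ b < a

/-- A finset is an *antichain*: its elements are pairwise incomparable. -/
def IsAC {α : Type*} [PartialOrder α] (A : Finset α) : Prop :=
  ∀ a ∈ A, ∀ b ∈ A, a ≠ b → Incomp a b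

/-- The *width* of a finite poset: the maximum cardinality of an antichain. -/
noncomputable def posetWidth (α : Type*) [PartialOrder α] [Fintype α] : ℕ :=
  sSup {c : ℕ | ∃ A : Finset α, IsAC A ∧ A.card = c}

/-- A *width-antichain*: an antichain whose cardinality equals the width. -/
def IsWidthAC {α : Type*} [PartialOrder α] [Fintype α] (A : Finset α) : Prop :=
  IsAC A ∧ A.card = posetWidth α

/-- A finite poset is *width-extensible* if every antichain is contained in
some width-antichain. -/
def WidthExtensible (α : Type*) [PartialOrder α] [Fintype α] : Prop :=
  ∀ A : Finset α, IsAC A → ∃ W : Finset α, IsWidthAC W ∧ A ⊆ W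

/-- An *indexed chain partition* of a poset `α` into `n` chains: numbers
`m i` and maps `c i : {0,…,m i} → α` which are strictly order-preserving
(hence injective), have pairwise disjoint images, and jointly cover `α`. -/
structure ChainPartition (α : Type*) [PartialOrder α] (n : ℕ) where
  m : Fin n → ℕ
  c : Fin n → ℕ → α
  mono : ∀ i : Fin n, ∀ k l : ℕ, k < l → l ≤ m i → c i k < c i l
  disj : ∀ i j : Fin n, i ≠ j → ∀ k l : ℕ, k ≤ m i → l ≤ m j → c i k ≠ c j l
  cover : ∀ x : α, ∃ i : Fin n, ∃ k : ℕ, k ≤ m i ∧ c i k = x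

/-- Condition ω₁ : all initial states are pairwise incomparable. -/
def ChainPartition.Om1 {α : Type*} [PartialOrder α] {n : ℕ} (P : ChainPartition α n) : Prop :=
  ∀ i j : Fin n, i ≠ j → Incomp (P.c i 0) (P.c j 0)

/-- Condition ω₂ : all final states are pairwise incomparable. -/
def ChainPartition.Om2 {α : Type*} [PartialOrder α] {n : ℕ} (P : ChainPartition α n) : Prop :=
  ∀ i j : Fin n, i ≠ j → Incomp (P.c i (P.m i)) (P.c j (P.m j))

/-- Condition ω₃ : if `[i,s] < [j,t]` and `[j,t-1] < [k,u]` then `[i,s] < [k,u]`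
(for `i ≠ j`, `j ≠ k`, `1 ≤ t`). -/
def ChainPartition.Om3 {α : Type*} [PartialOrder α] {n : ℕ} (P : ChainPartition α n) : Prop :=
  ∀ i j k : Fin n, i ≠ j → j ≠ k →
    ∀ s t u : ℕ, 1 ≤ t → s ≤ P.m i → t ≤ P.m j → u ≤ P.m k →
      P.c i s < P.c j t → P.c j (t - 1) < P.c k u → P.c i s < P.c k u

/-- Condition ψ : if `[i,s-1] < [j,t]` then `¬([j,t-1] < [i,s])`
(for `i ≠ j`, `1 ≤ s`, `1 ≤ t`). -/
def ChainPartition.Psi {α : Type*} [PartialOrder α] {n : ℕ} (P : ChainPartition α n) : Prop :=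
  ∀ i j : Fin n, i ≠ j →
    ∀ s t : ℕ, 1 ≤ s → 1 ≤ t → s ≤ P.m i → t ≤ P.m j →
      P.c i (s - 1) < P.c j t → ¬ P.c j (t - 1) < P.c i s

/-- Order on (width-)antichains: `A ≤ B` iff every element of `A` is below
some element of `B`. -/
def ACle {α : Type*} [PartialOrder α] (A B : Finset α) : Prop :=
  ∀ a ∈ A, ∃ b ∈ B, a ≤ b

/-- A finite poset is *interleaving-consistent* if every width-antichain `W`
that is strictly below some width-antichain can be advanced to a
width-antichain `W'` differing from `W` in exactly one element. -/
def InterleavingConsistent (α : Type*) [PartialOrder α] [Fintype α] : Prop :=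
  ∀ W : Finset α, IsWidthAC W →
    (∃ W'' : Finset α, IsWidthAC W'' ∧ ACle W W'' ∧ W ≠ W'') →
    ∃ W' : Finset α, IsWidthAC W' ∧ ACle W W' ∧ W ≠ W' ∧ (W ∩ W').card = W.card - 1

/-! Width-antichains form a lattice under `ACle`: for width-antichains `U` and `V`, the minimal
and the maximal elements of `U ∪ V` are again width-antichains, because together they cover
`U ∪ V` and both contain `U ∩ V`. To extend an antichain `A` with three distinct elements
`a₁, a₂, a₃`, extend each `A \ {aᵢ}` by induction to a width-antichain `Wᵢ` and take the median
`(W₁ ∧ W₂) ∨ (W₂ ∧ W₃) ∨ (W₃ ∧ W₁)`. Every `x ∈ A` lies in two of the `Wᵢ`, say `W₁` and `W₂`;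
the median lies between `W₁ ∧ W₂` and `W₁ ∨ W₂`, which both contain `x`, so it contains `x`
too. -/

open Finset

section Antichains

variable {α : Type*} [PartialOrder α]

theorem isAC_iff_isAntichain {A : Finset α} : IsAC A ↔ IsAntichain (· ≤ ·) (A : Set α) :=
  ⟨fun h _ ha _ hb hab hle => (h _ ha _ hb hab).2.1 (hle.lt_of_ne hab),
    fun h _ ha _ hb hab =>
      ⟨hab, fun hlt => h ha hb hab hlt.le, fun hlt => h hb ha hab.symm hlt.le⟩⟩

theorem IsAC.subset {A B : Finset α} (hA : IsAC A) (hBA : B ⊆ A) : IsAC B :=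
  fun a ha b hb => hA a (hBA ha) b (hBA hb)

noncomputable def minElems (s : Finset α) : Finset α := s.filter (Minimal (· ∈ s))

noncomputable def maxElems (s : Finset α) : Finset α := s.filter (Maximal (· ∈ s))

theorem mem_minElems {s : Finset α} {x : α} : x ∈ minElems s ↔ Minimal (· ∈ s) x := by
  rw [minElems, mem_filter]
  exact and_iff_right_of_imp Minimal.prop

theorem mem_maxElems {s : Finset α} {x : α} : x ∈ maxElems s ↔ Maximal (· ∈ s) x := by
  rw [maxElems, mem_filter]
  exact and_iff_right_of_imp Maximal.prop

theorem isAntichain_minElems (s : Finset α) : IsAntichain (· ≤ ·) (minElems s : Set α) :=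
  (setOfPred_minimal_antichain _).subset fun _ hx => mem_minElems.1 hx

theorem isAntichain_maxElems (s : Finset α) : IsAntichain (· ≤ ·) (maxElems s : Set α) :=
  (setOfPred_maximal_antichain _).subset fun _ hx => mem_maxElems.1 hx

theorem isAC_minElems (s : Finset α) : IsAC (minElems s) :=
  isAC_iff_isAntichain.2 (isAntichain_minElems s)

theorem isAC_maxElems (s : Finset α) : IsAC (maxElems s) :=
  isAC_iff_isAntichain.2 (isAntichain_maxElems s)

theorem maxElems_union_maxElems (s t : Finset α) :
    maxElems (maxElems s ∪ t) = maxElems (s ∪ t) := by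
  ext x
  rw [mem_maxElems (s := maxElems s ∪ t), mem_maxElems (s := s ∪ t), maximal_iff_forall_gt,
    maximal_iff_forall_gt]
  simp only [mem_union]
  constructor
  · rintro ⟨hx, hgt⟩
    refine ⟨hx.imp_left fun h => (mem_maxElems.1 h).prop, fun y hxy hy => ?_⟩
    rcases hy with hys | hyt
    · obtain ⟨m, hym, hm⟩ := s.exists_le_maximal hys
      exact hgt (hxy.trans_le hym) (Or.inl (mem_maxElems.2 hm))
    · exact hgt hxy (Or.inr hyt)
  · rintro ⟨hx, hgt⟩
    refine ⟨hx.imp_left fun hxs => mem_maxElems.2 ⟨hxs, fun y hys hxy => ?_⟩,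
      fun y hxy hy => hgt hxy (hy.imp_left fun h => (mem_maxElems.1 h).prop)⟩
    by_contra hyx
    exact hgt (lt_of_le_not_ge hxy hyx) (Or.inl hys)

noncomputable def median3 (U V W : Finset α) : Finset α :=
  maxElems (minElems (U ∪ V) ∪ minElems (V ∪ W) ∪ minElems (W ∪ U))

theorem median3_rotate (U V W : Finset α) : median3 U V W = median3 V W U := by
  simp only [median3, union_comm, union_left_comm]

theorem ACle.trans {A B C : Finset α} (hAB : ACle A B) (hBC : ACle B C) : ACle A C := by
  intro a ha
  obtain ⟨b, hb, hab⟩ := hAB a ha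
  obtain ⟨c, hc, hbc⟩ := hBC b hb
  exact ⟨c, hc, hab.trans hbc⟩

theorem ACle.of_subset {A B : Finset α} (h : A ⊆ B) : ACle A B :=
  fun a ha => ⟨a, h ha, le_rfl⟩

theorem ACle.union {A B C : Finset α} (hA : ACle A C) (hB : ACle B C) : ACle (A ∪ B) C :=
  fun a ha => (mem_union.1 ha).elim (hA a) (hB a)

theorem ACle_maxElems (s : Finset α) : ACle s (maxElems s) := fun a ha => by
  obtain ⟨m, ham, hm⟩ := s.exists_le_maximal ha
  exact ⟨m, mem_maxElems.2 hm, ham⟩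

theorem mem_of_ACle_of_ACle {L M R : Finset α} (hR : IsAntichain (· ≤ ·) (R : Set α))
    (hLM : ACle L M) (hMR : ACle M R) {x : α} (hxL : x ∈ L) (hxR : x ∈ R) : x ∈ M := by
  obtain ⟨y, hy, hxy⟩ := hLM x hxL
  obtain ⟨z, hz, hyz⟩ := hMR y hy
  obtain rfl : x = z := hR.eq hxR hz (hxy.trans hyz)
  rwa [le_antisymm hxy hyz]

variable {U V : Finset α} (hU : IsAntichain (· ≤ ·) (U : Set α))
  (hV : IsAntichain (· ≤ ·) (V : Set α))
include hU hV

theorem mem_minElems_union_of_mem_of_mem {x : α} (hxU : x ∈ U) (hxV : x ∈ V) :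
    x ∈ minElems (U ∪ V) :=
  mem_minElems.2 <| minimal_iff_forall_lt.2 ⟨mem_union_left _ hxU, fun _ hyx hy =>
    (mem_union.1 hy).elim (hU.not_lt · hxU hyx) (hV.not_lt · hxV hyx)⟩

theorem mem_maxElems_union_of_mem_of_mem {x : α} (hxU : x ∈ U) (hxV : x ∈ V) :
    x ∈ maxElems (U ∪ V) :=
  mem_maxElems.2 <| maximal_iff_forall_gt.2 ⟨mem_union_left _ hxU, fun _ hxy hy =>
    (mem_union.1 hy).elim (hU.not_lt hxU · hxy) (hV.not_lt hxV · hxy)⟩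

theorem not_lt_lt_of_mem_union {x y z : α} (hx : x ∈ U ∪ V) (hy : y ∈ U ∪ V) (hz : z ∈ U ∪ V)
    (hxy : x < y) (hyz : y < z) : False := by
  have hxz := hxy.trans hyz
  rw [mem_union] at hx hy hz
  rcases hx with hx | hx <;> rcases hy with hy | hy <;> rcases hz with hz | hz <;>
    first
    | exact hU.not_lt hx hy hxy | exact hV.not_lt hx hy hxy
    | exact hU.not_lt hy hz hyz | exact hV.not_lt hy hz hyz
    | exact hU.not_lt hx hz hxz | exact hV.not_lt hx hz hxz

theorem union_subset_minElems_union_maxElems :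
    U ∪ V ⊆ minElems (U ∪ V) ∪ maxElems (U ∪ V) := by
  intro y hy
  rw [mem_union, mem_minElems, mem_maxElems, minimal_iff_forall_lt, maximal_iff_forall_gt]
  by_contra! h
  obtain ⟨x, hxy, hx⟩ := h.1 hy
  obtain ⟨z, hyz, hz⟩ := h.2 hy
  exact not_lt_lt_of_mem_union hU hV hx hy hz hxy hyz

theorem card_add_card_le_card_minElems_add_card_maxElems :
    U.card + V.card ≤ (minElems (U ∪ V)).card + (maxElems (U ∪ V)).card := by
  have hinter : U ∩ V ⊆ minElems (U ∪ V) ∩ maxElems (U ∪ V) := fun x hx => by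
    rw [mem_inter] at hx ⊢
    exact ⟨mem_minElems_union_of_mem_of_mem hU hV hx.1 hx.2,
      mem_maxElems_union_of_mem_of_mem hU hV hx.1 hx.2⟩
  calc U.card + V.card = (U ∪ V).card + (U ∩ V).card := (card_union_add_card_inter U V).symm
    _ ≤ (minElems (U ∪ V) ∪ maxElems (U ∪ V)).card + (minElems (U ∪ V) ∩ maxElems (U ∪ V)).card :=
      add_le_add (card_le_card (union_subset_minElems_union_maxElems hU hV)) (card_le_card hinter)
    _ = (minElems (U ∪ V)).card + (maxElems (U ∪ V)).card := card_union_add_card_inter _ _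

end Antichains

section WidthAntichains

variable {α : Type*} [PartialOrder α] [Fintype α]

theorem card_le_posetWidth {A : Finset α} (hA : IsAC A) : A.card ≤ posetWidth α :=
  le_csSup ⟨Fintype.card α, by rintro c ⟨B, -, rfl⟩; exact card_le_univ B⟩ ⟨A, hA, rfl⟩

theorem IsWidthAC.isAntichain {W : Finset α} (hW : IsWidthAC W) :
    IsAntichain (· ≤ ·) (W : Set α) :=
  isAC_iff_isAntichain.1 hW.1

theorem IsWidthAC.exists_le_or_le {W : Finset α} (hW : IsWidthAC W) (x : α) :
    ∃ w ∈ W, x ≤ w ∨ w ≤ x := by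
  by_contra! h
  have hxW : x ∉ W := fun hx => (h x hx).1 le_rfl
  have hins : IsAC (insert x W) := by
    rw [isAC_iff_isAntichain, coe_insert]
    exact hW.isAntichain.insert (fun w hw _ => (h w hw).2) (fun w hw _ => (h w hw).1)
  have := card_le_posetWidth hins
  rw [card_insert_of_notMem hxW, hW.2] at this
  omega

theorem IsWidthAC.minElems_ACle {W s : Finset α} (hW : IsWidthAC W) (hWs : W ⊆ s) :
    ACle (minElems s) W := by
  intro z hz
  obtain ⟨w, hw, hzw | hwz⟩ := hW.exists_le_or_le z
  · exact ⟨w, hw, hzw⟩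
  · exact ⟨w, hw, ((mem_minElems.1 hz).eq_of_le (hWs hw) hwz).ge⟩

variable {U V : Finset α}

theorem IsWidthAC.minElems_union (hU : IsWidthAC U) (hV : IsWidthAC V) :
    IsWidthAC (minElems (U ∪ V)) := by
  have hsum := card_add_card_le_card_minElems_add_card_maxElems hU.isAntichain hV.isAntichain
  have hmax := card_le_posetWidth (isAC_maxElems (U ∪ V))
  rw [hU.2, hV.2] at hsum
  exact ⟨isAC_minElems _, le_antisymm (card_le_posetWidth (isAC_minElems _)) (by omega)⟩

theorem IsWidthAC.maxElems_union (hU : IsWidthAC U) (hV : IsWidthAC V) :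
    IsWidthAC (maxElems (U ∪ V)) := by
  have hsum := card_add_card_le_card_minElems_add_card_maxElems hU.isAntichain hV.isAntichain
  have hmin := card_le_posetWidth (isAC_minElems (U ∪ V))
  rw [hU.2, hV.2] at hsum
  exact ⟨isAC_maxElems _, le_antisymm (card_le_posetWidth (isAC_maxElems _)) (by omega)⟩

theorem isWidthAC_median3 {W : Finset α} (hU : IsWidthAC U) (hV : IsWidthAC V)
    (hW : IsWidthAC W) : IsWidthAC (median3 U V W) := by
  rw [median3, ← maxElems_union_maxElems]
  exact ((hU.minElems_union hV).maxElems_union (hV.minElems_union hW)).maxElems_union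
    (hW.minElems_union hU)

theorem mem_median3_of_mem_of_mem {W : Finset α} (hU : IsWidthAC U) (hV : IsWidthAC V)
    {x : α} (hxU : x ∈ U) (hxV : x ∈ V) : x ∈ median3 U V W := by
  have hUsup : ACle U (maxElems (U ∪ V)) :=
    (ACle.of_subset subset_union_left).trans (ACle_maxElems _)
  have hVsup : ACle V (maxElems (U ∪ V)) :=
    (ACle.of_subset subset_union_right).trans (ACle_maxElems _)
  have hinf_le : ACle (minElems (U ∪ V)) (median3 U V W) :=
    (ACle.of_subset (subset_union_left.trans subset_union_left)).trans (ACle_maxElems _)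
  have hle_sup : ACle (median3 U V W) (maxElems (U ∪ V)) :=
    (ACle.of_subset (filter_subset _ _)).trans <|
      (((hU.minElems_ACle subset_union_left).trans hUsup).union
        ((hV.minElems_ACle subset_union_left).trans hVsup)).union
        ((hU.minElems_ACle subset_union_right).trans hUsup)
  exact mem_of_ACle_of_ACle (isAntichain_maxElems _) hinf_le hle_sup
    (mem_minElems_union_of_mem_of_mem hU.isAntichain hV.isAntichain hxU hxV)
    (mem_maxElems_union_of_mem_of_mem hU.isAntichain hV.isAntichain hxU hxV)

theorem subset_median3_of_erase_subset {A W₁ W₂ W₃ : Finset α} {a₁ a₂ a₃ : α}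
    (h₁₂ : a₁ ≠ a₂) (h₁₃ : a₁ ≠ a₃) (h₂₃ : a₂ ≠ a₃)
    (hW₁ : IsWidthAC W₁) (hW₂ : IsWidthAC W₂) (hW₃ : IsWidthAC W₃)
    (hA₁ : A.erase a₁ ⊆ W₁) (hA₂ : A.erase a₂ ⊆ W₂) (hA₃ : A.erase a₃ ⊆ W₃) :
    A ⊆ median3 W₁ W₂ W₃ := by
  intro x hx
  have mem_of_ne {a : α} {W : Finset α} (hW : A.erase a ⊆ W) (hxa : x ≠ a) : x ∈ W :=
    hW (mem_erase.2 ⟨hxa, hx⟩)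
  by_cases hx₁ : x = a₁
  · subst hx₁
    rw [median3_rotate]
    exact mem_median3_of_mem_of_mem hW₂ hW₃ (mem_of_ne hA₂ h₁₂) (mem_of_ne hA₃ h₁₃)
  by_cases hx₂ : x = a₂
  · subst hx₂
    rw [← median3_rotate]
    exact mem_median3_of_mem_of_mem hW₃ hW₁ (mem_of_ne hA₃ h₂₃) (mem_of_ne hA₁ h₁₂.symm)
  exact mem_median3_of_mem_of_mem hW₁ hW₂ (mem_of_ne hA₁ hx₁) (mem_of_ne hA₂ hx₂)

end WidthAntichains

/-- A finite poset is width-extensible iff every antichain of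
size at most two is contained in some width-antichain. -/
theorem widthExtensible_iff_pairs {α : Type*} [PartialOrder α] [Fintype α] :
    WidthExtensible α ↔
      ∀ A : Finset α, IsAC A → A.card ≤ 2 →
        ∃ W : Finset α, IsWidthAC W ∧ A ⊆ W := by
  refine ⟨fun h A hA _ => h A hA, fun h A hA => ?_⟩
  induction A using Finset.strongInduction with
  | H A ih =>
  by_cases hcard : A.card ≤ 2
  · exact h A hA hcard
  obtain ⟨a₁, a₂, a₃, ha₁, ha₂, ha₃, h₁₂, h₁₃, h₂₃⟩ := two_lt_card_iff.1 (not_le.1 hcard)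
  have extend_erase {a : α} (ha : a ∈ A) : ∃ W, IsWidthAC W ∧ A.erase a ⊆ W :=
    ih _ (erase_ssubset ha) (hA.subset (erase_subset a A))
  obtain ⟨W₁, hW₁, hA₁⟩ := extend_erase ha₁
  obtain ⟨W₂, hW₂, hA₂⟩ := extend_erase ha₂
  obtain ⟨W₃, hW₃, hA₃⟩ := extend_erase ha₃
  exact ⟨median3 W₁ W₂ W₃, isWidthAC_median3 hW₁ hW₂ hW₃,
    subset_median3_of_erase_subset h₁₂ h₁₃ h₂₃ hW₁ hW₂ hW₃ hA₁ hA₂ hA₃⟩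
end

section
/- Let (S, <) be a finite poset of width w equipped with an indexed chain partition into exactly w chains, and suppose that every antichain of S of size at most two is contained in some width-antichain. Then for every antichain A of S and every chain index i such that no element of A lies on chain i, there exists an element d on chain i that is incomparable to every element of A (so A ∪ {d} is an antichain of size |A| + 1). -/
open scoped Classical

/-- If every antichain of size at most two extends to a
width-antichain, then any antichain `A` missing chain `i` can be enlarged by
an element of chain `i` incomparable to all of `A`. -/
theorem antichain_extend_on_missing_chain {α : Type*} [PartialOrder α] [Fintype α]
    {n : ℕ} (P : ChainPartition α n) (hw : posetWidth α = n)
    (h2 : ∀ A : Finset α, IsAC A → A.card ≤ 2 →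
      ∃ W : Finset α, IsWidthAC W ∧ A ⊆ W)
    (A : Finset α) (hA : IsAC A) (i : Fin n)
    (hi : ∀ k : ℕ, k ≤ P.m i → P.c i k ∉ A) :
    ∃ k : ℕ, k ≤ P.m i ∧ (∀ a ∈ A, Incomp (P.c i k) a) ∧
      IsAC (insert (P.c i k) A) ∧ (insert (P.c i k) A).card = A.card + 1 := by
  classical
  choose ci ck hck hcc using P.cover
  have mono' : ∀ (j : Fin n) (k l : ℕ), k ≤ l → l ≤ P.m j → P.c j k ≤ P.c j l := by
    intro j k l hkl hl
    rcases eq_or_lt_of_le hkl with h | h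
    · rw [h]
    · exact (P.mono j k l h hl).le
  -- elements on the same chain are comparable
  have samechain : ∀ a b : α, ci a = ci b → a ≠ b → a < b ∨ b < a := by
    intro a b hab hne
    have hkne : ck a ≠ ck b := by
      intro h
      exact hne (by rw [← hcc a, ← hcc b, hab, h])
    rcases lt_or_gt_of_ne hkne with h | h
    · left
      have := P.mono (ci a) (ck a) (ck b) h (by rw [hab]; exact hck b)
      rwa [hcc a, show P.c (ci a) (ck b) = b by rw [hab, hcc b]] at this
    · right
      have := P.mono (ci a) (ck b) (ck a) h (hck a)
      rwa [hcc a, show P.c (ci a) (ck b) = b by rw [hab, hcc b]] at this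
  -- every width antichain contains an element of chain i
  have hit : ∀ W : Finset α, IsWidthAC W → ∃ k, k ≤ P.m i ∧ P.c i k ∈ W := by
    intro W hW
    have hinj : Set.InjOn ci ↑W := by
      intro a ha b hb hab
      by_contra hne
      have h1 := hW.1 a ha b hb hne
      rcases samechain a b hab hne with h | h
      · exact h1.2.1 h
      · exact h1.2.2 h
    have hcard : (W.image ci).card = n := by
      rw [Finset.card_image_of_injOn hinj, hW.2, hw]
    have huniv : W.image ci = Finset.univ :=
      Finset.eq_univ_of_card _ (by rw [hcard]; simp)
    have : i ∈ W.image ci := by rw [huniv]; exact Finset.mem_univ i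
    obtain ⟨a, haW, hai⟩ := Finset.mem_image.1 this
    refine ⟨ck a, ?_, ?_⟩
    · rw [← hai]; exact hck a
    · rw [← hai, hcc a]; exact haW
  -- pairwise: for any a b in A there is a common incomparable element on chain i
  have pair : ∀ a ∈ A, ∀ b ∈ A, ∃ k, k ≤ P.m i ∧ Incomp (P.c i k) a ∧ Incomp (P.c i k) b := by
    intro a ha b hb
    have hac : IsAC ({a, b} : Finset α) := by
      intro x hx y hy hxy
      simp only [Finset.mem_insert, Finset.mem_singleton] at hx hy
      rcases hx with hx | hx <;> rcases hy with hy | hy <;> subst hx <;> subst hy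
      · exact absurd rfl hxy
      · exact hA _ ha _ hb hxy
      · exact hA _ hb _ ha hxy
      · exact absurd rfl hxy
    have hcard2 : ({a, b} : Finset α).card ≤ 2 :=
      (Finset.card_insert_le _ _).trans (by simp)
    obtain ⟨W, hW, hsub⟩ := h2 {a, b} hac hcard2
    obtain ⟨k, hk, hkW⟩ := hit W hW
    have hka : P.c i k ≠ a := fun h => hi k hk (h ▸ ha)
    have hkb : P.c i k ≠ b := fun h => hi k hk (h ▸ hb)
    exact ⟨k, hk, hW.1 _ hkW a (hsub (by simp)) hka, hW.1 _ hkW b (hsub (by simp)) hkb⟩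
  rcases A.eq_empty_or_nonempty with rfl | hne
  · refine ⟨0, Nat.zero_le _, by simp, ?_, by simp⟩
    intro x hx y hy hxy
    simp only [Finset.mem_insert, Finset.notMem_empty, or_false] at hx hy
    subst hx; subst hy; exact absurd rfl hxy
  -- the nonempty case: Helly for intervals on chain i
  set S : α → Finset ℕ := fun a =>
    (Finset.range (P.m i + 1)).filter (fun k => Incomp (P.c i k) a) with hS
  have hSmem : ∀ a k, k ∈ S a ↔ k ≤ P.m i ∧ Incomp (P.c i k) a := by
    intro a k
    simp [hS, Nat.lt_succ_iff]
  have Sne : ∀ a ∈ A, (S a).Nonempty := by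
    intro a ha
    obtain ⟨k, hk, h1, _⟩ := pair a ha a ha
    exact ⟨k, (hSmem a k).2 ⟨hk, h1⟩⟩
  set lo : α → ℕ := fun a => if h : (S a).Nonempty then (S a).min' h else 0 with hlo
  obtain ⟨a0, ha0, hmax⟩ := A.exists_max_image lo hne
  have hlo_eq : ∀ a (h : (S a).Nonempty), lo a = (S a).min' h := by
    intro a h; simp [hlo, dif_pos h]
  have hk0mem : lo a0 ∈ S a0 := by
    rw [hlo_eq a0 (Sne a0 ha0)]; exact Finset.min'_mem _ _
  have hk0le : lo a0 ≤ P.m i := ((hSmem a0 (lo a0)).1 hk0mem).1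
  have claim : ∀ a ∈ A, Incomp (P.c i (lo a0)) a := by
    intro a ha
    have hSa := Sne a ha
    obtain ⟨k, hk, hk0, hka⟩ := pair a0 ha0 a ha
    have hkS0 : k ∈ S a0 := (hSmem a0 k).2 ⟨hk, hk0⟩
    have hkSa : k ∈ S a := (hSmem a k).2 ⟨hk, hka⟩
    have h1 : lo a0 ≤ k := by
      rw [hlo_eq a0 (Sne a0 ha0)]; exact Finset.min'_le _ _ hkS0
    have h2 : lo a0 ≤ (S a).max' hSa := h1.trans (Finset.le_max' _ _ hkSa)
    have h3 : lo a ≤ lo a0 := hmax a ha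
    -- properties of the endpoints
    have hloa_mem : lo a ∈ S a := by
      rw [hlo_eq a hSa]; exact Finset.min'_mem _ _
    have hhia_mem : (S a).max' hSa ∈ S a := Finset.max'_mem _ _
    have hloa := (hSmem a _).1 hloa_mem
    have hhia := (hSmem a _).1 hhia_mem
    refine ⟨fun h => hi _ hk0le (h ▸ ha), ?_, ?_⟩
    · intro hlt
      exact hloa.2.2.1 (lt_of_le_of_lt (mono' i (lo a) (lo a0) h3 hk0le) hlt)
    · intro hlt
      exact hhia.2.2.2 (lt_of_lt_of_le hlt (mono' i (lo a0) _ h2 hhia.1))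
  refine ⟨lo a0, hk0le, claim, ?_, ?_⟩
  · intro x hx y hy hxy
    rcases Finset.mem_insert.1 hx with rfl | hxA <;>
      rcases Finset.mem_insert.1 hy with hy' | hyA
    · exact absurd hy'.symm hxy
    · exact claim y hyA
    · obtain ⟨h1, h2, h3⟩ := claim x hxA
      subst hy'
      exact ⟨hxy, h3, h2⟩
    · exact hA x hxA y hyA hxy
  · exact Finset.card_insert_of_notMem (hi _ hk0le)
end

section
/- Let (S, <) be a finite poset with an indexed chain partition into n chains that satisfies conditions ω1, ω2 and ω3. Then the width of S equals n and (S, <) is width-extensible. -/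
open scoped Classical

section Aux

variable {α : Type*} [PartialOrder α] {n : ℕ}

lemma cp_le (P : ChainPartition α n) (i : Fin n) {k l : ℕ} (hkl : k ≤ l) (hl : l ≤ P.m i) :
    P.c i k ≤ P.c i l := by
  rcases hkl.lt_or_eq with h | h
  · exact (P.mono i k l h hl).le
  · exact h ▸ le_rfl

lemma cp_idx_lt (P : ChainPartition α n) (i : Fin n) {k l : ℕ} (hk : k ≤ P.m i)
    (h : P.c i k < P.c i l) (hl : l ≤ P.m i) : k < l := by
  by_contra hc
  push_neg at hc
  exact absurd h (not_lt_of_ge (cp_le P i hc hk))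

lemma ac_card_le (P : ChainPartition α n) (A : Finset α) (hA : IsAC A) : A.card ≤ n := by
  classical
  have hinj : Set.InjOn (fun x => (P.cover x).choose) A := by
    intro x hx y hy hxy
    obtain ⟨kx, hkx, hcx⟩ := (P.cover x).choose_spec
    obtain ⟨ky, hky, hcy⟩ := (P.cover y).choose_spec
    have hxy' : (P.cover x).choose = (P.cover y).choose := hxy
    rw [hxy'] at hcx hkx
    set i : Fin n := (P.cover y).choose with hidef
    clear_value i
    clear hxy hxy' hidef
    subst hcx
    subst hcy
    by_contra hne
    have hinc := hA _ hx _ hy hne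
    rcases lt_trichotomy kx ky with h | h | h
    · exact hinc.2.1 (P.mono i kx ky h hky)
    · exact hne (h ▸ rfl)
    · exact hinc.2.2 (P.mono i ky kx h hkx)
  calc A.card ≤ (Finset.univ : Finset (Fin n)).card :=
        Finset.card_le_card_of_injOn _ (fun x _ => Finset.mem_univ _) hinj
    _ = n := by simp

lemma key_extend (P : ChainPartition α n) (h1 : P.Om1) (h2 : P.Om2) (h3 : P.Om3)
    (A : Finset α) (hA : IsAC A) :
    ∃ W : Finset α, IsAC W ∧ W.card = n ∧ A ⊆ W := by
  classical
  set Bel : Fin n → ℕ → Prop := fun j t => ∃ x ∈ A, P.c j t < x with hBel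
  have hTop : ∀ j, ¬ Bel j (P.m j) := by
    rintro j ⟨x, hxA, hlt⟩
    obtain ⟨i, s, hs, rfl⟩ := P.cover x
    by_cases hij : i = j
    · subst hij
      exact absurd hlt (not_lt_of_ge (cp_le P i hs le_rfl))
    · exact (h2 j i (Ne.symm hij)).2.1 (lt_of_lt_of_le hlt (cp_le P i hs le_rfl))
  have hex : ∀ j, ∃ t, ¬ Bel j t := fun j => ⟨P.m j, hTop j⟩
  set l : Fin n → ℕ := fun j => Nat.find (hex j) with hldef
  have hlspec : ∀ j, ¬ Bel j (l j) := fun j => Nat.find_spec (hex j)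
  have hlmin : ∀ j, ∀ t, t < l j → Bel j t := by
    intro j t ht
    have := Nat.find_min (hex j) ht
    push_neg at this
    exact this
  have hlle : ∀ j, l j ≤ P.m j := fun j => Nat.find_le (hTop j)
  have main : ∀ j j' : Fin n, j ≠ j' → ¬ P.c j (l j) < P.c j' (l j') := by
    intro j j' hne hlt
    rcases Nat.eq_zero_or_pos (l j') with h0 | hpos
    · rw [h0] at hlt
      exact (h1 j j' hne).2.1
        (lt_of_le_of_lt (cp_le P j (Nat.zero_le _) (hlle j)) hlt)
    · obtain ⟨x, hxA, hxlt⟩ := hlmin j' (l j' - 1) (Nat.sub_lt hpos one_pos)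
      obtain ⟨i, s, hs, rfl⟩ := P.cover x
      by_cases hij' : i = j'
      · subst hij'
        have hidx : l i - 1 < s :=
          cp_idx_lt P i (le_trans (Nat.sub_le _ _) (hlle i)) hxlt hs
        have hls : l i ≤ s := by omega
        exact hlspec j ⟨P.c i s, hxA, lt_of_lt_of_le hlt (cp_le P i hls hs)⟩
      · by_cases hij : i = j
        · subst hij
          rcases lt_or_ge (l i) s with hls | hls
          · exact hlspec i ⟨P.c i s, hxA, P.mono i _ _ hls hs⟩
          · have h1' : P.c i s < P.c j' (l j') :=
              lt_of_le_of_lt (cp_le P i hls (hlle i)) hlt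
            exact lt_irrefl _
              (h3 i j' i hne hne.symm s (l j') s hpos hs (hlle j') hs h1' hxlt)
        · exact hlspec j ⟨P.c i s, hxA,
            h3 j j' i hne (fun h => hij' h.symm) (l j) (l j') s hpos
              (hlle j) (hlle j') hs hlt hxlt⟩
  refine ⟨Finset.univ.image (fun j => P.c j (l j)), ?_, ?_, ?_⟩
  · intro a ha b hb hab
    obtain ⟨j, -, rfl⟩ := Finset.mem_image.mp ha
    obtain ⟨j', -, rfl⟩ := Finset.mem_image.mp hb
    have hjj : j ≠ j' := by rintro rfl; exact hab rfl
    exact ⟨hab, main j j' hjj, main j' j hjj.symm⟩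
  · rw [Finset.card_image_of_injOn, Finset.card_univ, Fintype.card_fin]
    intro j _ j' _ h
    by_contra hne
    exact P.disj j j' hne _ _ (hlle j) (hlle j') h
  · intro a haA
    obtain ⟨i, s, hs, rfl⟩ := P.cover a
    have hnb : ¬ Bel i s := by
      rintro ⟨x, hxA, hxlt⟩
      by_cases hx : x = P.c i s
      · exact lt_irrefl _ (hx ▸ hxlt)
      · exact (hA _ haA _ hxA (Ne.symm hx)).2.1 hxlt
    have hle : l i ≤ s := Nat.find_le hnb
    have hge : s ≤ l i := by
      by_contra hc
      push_neg at hc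
      exact hlspec i ⟨P.c i s, haA, P.mono i _ _ hc hs⟩
    have heq : l i = s := le_antisymm hle hge
    exact Finset.mem_image.mpr ⟨i, Finset.mem_univ i, by rw [heq]⟩

end Aux

/-- A chain partition into `n` chains satisfying ω₁, ω₂, ω₃
forces the width to be `n` and the poset to be width-extensible. -/
theorem omegas_imp_widthExtensible {α : Type*} [PartialOrder α] [Fintype α]
    {n : ℕ} (P : ChainPartition α n)
    (h1 : P.Om1) (h2 : P.Om2) (h3 : P.Om3) :
    posetWidth α = n ∧ WidthExtensible α := by
  classical
  have hub : ∀ c ∈ {c : ℕ | ∃ A : Finset α, IsAC A ∧ A.card = c}, c ≤ n := by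
    rintro c ⟨A, hA, rfl⟩
    exact ac_card_le P A hA
  obtain ⟨W0, hW0ac, hW0card, -⟩ := key_extend P h1 h2 h3 ∅
    (fun a ha => absurd ha (Finset.notMem_empty a))
  have hmem : n ∈ {c : ℕ | ∃ A : Finset α, IsAC A ∧ A.card = c} :=
    ⟨W0, hW0ac, hW0card⟩
  have hwidth : posetWidth α = n := by
    unfold posetWidth
    exact le_antisymm (csSup_le ⟨n, hmem⟩ hub) (le_csSup ⟨n, hub⟩ hmem)
  refine ⟨hwidth, fun A hA => ?_⟩
  obtain ⟨W, hWac, hWcard, hAW⟩ := key_extend P h1 h2 h3 A hA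
  exact ⟨W, ⟨hWac, by rw [hWcard, hwidth]⟩, hAW⟩
end

section
/- Let (S, <) be a finite poset with an indexed chain partition into n chains that satisfies conditions ω1, ω2 and ω3. Then for every element s ∈ S and every chain index i such that s does not lie on chain i, the set K = { k : 0 ≤ k ≤ m_i and [i,k] ∥ s } is nonempty and is an interval of indices: if k₁, k₂ ∈ K and k₁ ≤ k ≤ k₂ then k ∈ K. -/
open scoped Classical

/-- Under ω₁, ω₂, ω₃, for any state `s` not on chain `i`, the
set of indices `k` with `[i,k]` incomparable to `s` is a nonempty interval. -/
theorem concurrent_interval_nonempty {α : Type*} [PartialOrder α] [Fintype α]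
    {n : ℕ} (P : ChainPartition α n)
    (h1 : P.Om1) (h2 : P.Om2) (h3 : P.Om3)
    (s : α) (i : Fin n) (hs : ∀ k : ℕ, k ≤ P.m i → P.c i k ≠ s) :
    (∃ k : ℕ, k ≤ P.m i ∧ Incomp (P.c i k) s) ∧
      (∀ k₁ k₂ k : ℕ,
        (k₁ ≤ P.m i ∧ Incomp (P.c i k₁) s) →
        (k₂ ≤ P.m i ∧ Incomp (P.c i k₂) s) →
        k₁ ≤ k → k ≤ k₂ → (k ≤ P.m i ∧ Incomp (P.c i k) s)) := by
  obtain ⟨j, t, ht, hct⟩ := P.cover s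
  have hji : j ≠ i := by
    rintro rfl; exact hs t ht hct
  have hij : i ≠ j := Ne.symm hji
  have hmono_le : ∀ k l : ℕ, k ≤ l → l ≤ P.m i → P.c i k ≤ P.c i l := by
    intro k l hkl hl
    rcases eq_or_lt_of_le hkl with h | h
    · exact le_of_eq (by rw [h])
    · exact le_of_lt (P.mono i k l h hl)
  have hle0 : P.c j 0 ≤ s := by
    rcases Nat.eq_zero_or_pos t with h | h
    · subst h; exact le_of_eq hct
    · exact le_of_lt (hct ▸ P.mono j 0 t h ht)
  have hleM : s ≤ P.c j (P.m j) := by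
    rcases eq_or_lt_of_le ht with h | h
    · exact le_of_eq (by rw [← hct, h])
    · exact le_of_lt (hct ▸ P.mono j t (P.m j) h le_rfl)
  have hA : ¬ s < P.c i 0 := fun h =>
    (h1 j i hji).2.1 (lt_of_le_of_lt hle0 h)
  have hB : ¬ P.c i (P.m i) < s := fun h =>
    (h2 i j hij).2.1 (lt_of_lt_of_le h hleM)
  have key : ∀ k, k ≤ P.m i → ¬ P.c i k < s → ¬ s < P.c i k → Incomp (P.c i k) s :=
    fun k hk hx hy => ⟨hs k hk, hx, hy⟩
  constructor
  · have hex : ∃ k, ¬ P.c i k < s := ⟨P.m i, hB⟩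
    have hrspec : ¬ P.c i (Nat.find hex) < s := Nat.find_spec hex
    have hrle : Nat.find hex ≤ P.m i := Nat.find_le hB
    refine ⟨Nat.find hex, hrle, key _ hrle hrspec ?_⟩
    intro hsr
    rcases Nat.eq_zero_or_pos (Nat.find hex) with h0 | h0
    · exact hA (h0 ▸ hsr)
    · have hmin : P.c i (Nat.find hex - 1) < s := by
        by_contra h
        exact Nat.find_min hex (Nat.sub_lt h0 one_pos) h
      exact absurd (h3 j i j hji hij t (Nat.find hex) t h0 ht hrle ht
        (hct ▸ hsr) (hct ▸ hmin)) (lt_irrefl _)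
  · rintro k₁ k₂ k ⟨hk₁, hi₁⟩ ⟨hk₂, hi₂⟩ hle₁ hle₂
    have hk : k ≤ P.m i := le_trans hle₂ hk₂
    refine ⟨hk, key k hk ?_ ?_⟩
    · intro h
      exact hi₁.2.1 (lt_of_le_of_lt (hmono_le k₁ k hle₁ hk) h)
    · intro h
      exact hi₂.2.2 (lt_of_lt_of_le h (hmono_le k k₂ hle₂ hk₂))
end

section
/- Let (S, <) be a finite poset with an indexed chain partition into n chains that satisfies conditions ω1, ω2 and ω3. Then for all elements s, s' ∈ S with s ∥ s', and every chain index i such that neither s nor s' lies on chain i, there exists an index k with 0 ≤ k ≤ m_i such that [i,k] ∥ s and [i,k] ∥ s'. -/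
open scoped Classical

/-- Under ω₁, ω₂, ω₃, for incomparable `s, s'` neither lying
on chain `i`, there is a state on chain `i` incomparable to both. -/
theorem concurrent_intervals_intersect {α : Type*} [PartialOrder α] [Fintype α]
    {n : ℕ} (P : ChainPartition α n)
    (h1 : P.Om1) (h2 : P.Om2) (h3 : P.Om3)
    (s s' : α) (hss' : Incomp s s') (i : Fin n)
    (hs : ∀ k : ℕ, k ≤ P.m i → P.c i k ≠ s)
    (hs' : ∀ k : ℕ, k ≤ P.m i → P.c i k ≠ s') :
    ∃ k : ℕ, k ≤ P.m i ∧ Incomp (P.c i k) s ∧ Incomp (P.c i k) s' := by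
  classical
  obtain ⟨j, t, htj, hjt⟩ := P.cover s
  obtain ⟨j', t', htj', hjt'⟩ := P.cover s'
  subst hjt; subst hjt'
  have hji : j ≠ i := by rintro rfl; exact hs t htj rfl
  have hj'i : j' ≠ i := by rintro rfl; exact hs' t' htj' rfl
  -- monotonicity with ≤
  have monole : ∀ (jj : Fin n) (k l : ℕ), k ≤ l → l ≤ P.m jj → P.c jj k ≤ P.c jj l := by
    intro jj k l hkl hl
    rcases lt_or_eq_of_le hkl with h | h
    · exact (P.mono jj k l h hl).le
    · exact le_of_eq (by rw [h])
  -- no crossing: the chain i cannot jump over an off-chain element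
  have nocross : ∀ (jj : Fin n) (u : ℕ), jj ≠ i → u ≤ P.m jj →
      ∀ k, k + 1 ≤ P.m i → P.c i k < P.c jj u → ¬ P.c jj u < P.c i (k + 1) := by
    intro jj u hj hu k hk hlt hgt
    have h := h3 jj i jj hj (Ne.symm hj) u (k + 1) u (Nat.succ_le_succ (Nat.zero_le k))
      hu hk hu hgt (by simpa using hlt)
    exact absurd h (lt_irrefl _)
  -- nonemptiness: some state on chain i is incomparable to any off-chain element
  have nonempty : ∀ (jj : Fin n) (u : ℕ), jj ≠ i → u ≤ P.m jj →
      (∀ k, k ≤ P.m i → P.c i k ≠ P.c jj u) →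
      ∃ k, k ≤ P.m i ∧ Incomp (P.c i k) (P.c jj u) := by
    intro jj u hj hu hne
    by_cases h0 : P.c i 0 < P.c jj u
    · have hex : ∃ k, ¬ P.c i k < P.c jj u := by
        refine ⟨P.m i, fun hcon => (h2 i jj (Ne.symm hj)).2.1 ?_⟩
        exact lt_of_lt_of_le hcon (monole jj u (P.m jj) hu le_rfl)
      set k := Nat.find hex with hkdef
      have hk : ¬ P.c i k < P.c jj u := Nat.find_spec hex
      have hkM : k ≤ P.m i := Nat.find_min' hex (by
        intro hcon
        exact (h2 i jj (Ne.symm hj)).2.1 (lt_of_lt_of_le hcon (monole jj u (P.m jj) hu le_rfl)))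
      have hk0 : k ≠ 0 := fun h => hk (h ▸ h0)
      have hkpos : 0 < k := Nat.pos_of_ne_zero hk0
      have hpred : P.c i (k - 1) < P.c jj u :=
        not_not.mp (Nat.find_min hex (Nat.pred_lt hk0))
      have hsucc : k - 1 + 1 = k := Nat.succ_pred_eq_of_pos hkpos
      refine ⟨k, hkM, hne k hkM, hk, ?_⟩
      have := nocross jj u hj hu (k - 1) (by rwa [hsucc]) hpred
      rwa [hsucc] at this
    · refine ⟨0, Nat.zero_le _, hne 0 (Nat.zero_le _), h0, fun hcon => ?_⟩
      exact (h1 i jj (Ne.symm hj)).2.2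
        (lt_of_le_of_lt (monole jj 0 u (Nat.zero_le _) hu) hcon)
  -- key step: if the minimal incomparable indices are ordered and disjoint, order follows
  have key : ∀ (j1 : Fin n) (t1 : ℕ) (j2 : Fin n) (t2 : ℕ) (b1 b2 : ℕ),
      j1 ≠ i → j2 ≠ i → t1 ≤ P.m j1 → t2 ≤ P.m j2 →
      b1 ≤ P.m i → b2 ≤ P.m i → b1 ≤ b2 →
      Incomp (P.c i b1) (P.c j1 t1) → Incomp (P.c i b2) (P.c j2 t2) →
      (∀ k, k < b2 → ¬ Incomp (P.c i k) (P.c j2 t2)) →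
      (∀ k, k ≤ P.m i → P.c i k ≠ P.c j1 t1) →
      (∀ k, k ≤ P.m i → P.c i k ≠ P.c j2 t2) →
      ¬ Incomp (P.c i b2) (P.c j1 t1) →
      P.c j1 t1 < P.c j2 t2 := by
    intro j1 t1 j2 t2 b1 b2 hj1 hj2 ht1 ht2 hb1 hb2 hb12 hI1 hI2 hmin hne1 hne2 hnI
    -- b1 < b2, in particular b2 ≥ 1
    have hb1b2 : b1 ≠ b2 := by rintro rfl; exact hnI hI1
    have hblt : b1 < b2 := lt_of_le_of_ne hb12 hb1b2
    have hb2pos : 0 < b2 := Nat.lt_of_le_of_lt (Nat.zero_le b1) hblt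
    -- c i b2 is comparable to c j1 t1; it cannot be below it
    have hxlt : P.c j1 t1 < P.c i b2 := by
      by_contra h
      exact hnI ⟨hne1 b2 hb2,
        fun hh => hI1.2.1 (lt_of_le_of_lt (monole i b1 b2 hb12 hb2) hh), h⟩
    -- c i (b2 - 1) < c j2 t2 by minimality of b2
    have hb2pred : b2 - 1 < b2 := Nat.pred_lt (Nat.pos_iff_ne_zero.mp hb2pos)
    have hpredM : b2 - 1 ≤ P.m i := le_trans (le_of_lt hb2pred) hb2
    have hpred : P.c i (b2 - 1) < P.c j2 t2 := by
      by_contra h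
      exact hmin (b2 - 1) hb2pred ⟨hne2 (b2 - 1) hpredM, h,
        fun hh => hI2.2.2 (lt_trans hh (P.mono i (b2 - 1) b2 hb2pred hb2))⟩
    exact h3 j1 i j2 hj1 (Ne.symm hj2) t1 b2 t2 hb2pos ht1 hb2 ht2 hxlt hpred
  -- now the main argument
  by_contra hcon
  push_neg at hcon
  have hex1 : ∃ k, k ≤ P.m i ∧ Incomp (P.c i k) (P.c j t) := nonempty j t hji htj hs
  have hex2 : ∃ k, k ≤ P.m i ∧ Incomp (P.c i k) (P.c j' t') := nonempty j' t' hj'i htj' hs'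
  set b1 := Nat.find hex1 with hb1def
  set b2 := Nat.find hex2 with hb2def
  obtain ⟨hb1M, hI1⟩ := Nat.find_spec hex1
  obtain ⟨hb2M, hI2⟩ := Nat.find_spec hex2
  have hmin1 : ∀ k, k < b1 → ¬ Incomp (P.c i k) (P.c j t) := by
    intro k hk hI
    exact Nat.find_min hex1 hk ⟨le_trans (le_of_lt hk) hb1M, hI⟩
  have hmin2 : ∀ k, k < b2 → ¬ Incomp (P.c i k) (P.c j' t') := by
    intro k hk hI
    exact Nat.find_min hex2 hk ⟨le_trans (le_of_lt hk) hb2M, hI⟩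
  rcases le_total b1 b2 with hle | hle
  · have hnI : ¬ Incomp (P.c i b2) (P.c j t) := fun hI => hcon b2 hb2M hI hI2
    exact hss'.2.1 (key j t j' t' b1 b2 hji hj'i htj htj' hb1M hb2M hle hI1 hI2 hmin2 hs hs' hnI)
  · have hnI : ¬ Incomp (P.c i b1) (P.c j' t') := fun hI => hcon b1 hb1M hI1 hI
    exact hss'.2.2 (key j' t' j t b2 b1 hj'i hji htj' htj hb2M hb1M hle hI2 hI1 hmin1 hs' hs hnI)
end

section
/- Let (S, <) be a finite poset of width w with an indexed chain partition into exactly w chains. Then (S, <) is width-extensible if and only if the chain partition satisfies conditions ω1, ω2 and ω3. -/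
open scoped Classical

section Aux

variable {α : Type*} [PartialOrder α] [Fintype α] {n : ℕ} (P : ChainPartition α n)

lemma CP.mono_le (i : Fin n) {k l : ℕ} (hkl : k ≤ l) (hl : l ≤ P.m i) :
    P.c i k ≤ P.c i l := by
  rcases eq_or_lt_of_le hkl with h | h
  · exact le_of_eq (congrArg _ h)
  · exact le_of_lt (P.mono i k l h hl)

lemma CP.incomp_symm {a b : α} (h : Incomp a b) : Incomp b a :=
  ⟨h.1.symm, h.2.2, h.2.1⟩

/-- An antichain of cardinality `n` meets every chain of a partition into `n` chains. -/
lemma CP.widthAC_chain {W : Finset α} (hW : IsAC W) (hcard : W.card = n) (j : Fin n) :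
    ∃ r, r ≤ P.m j ∧ P.c j r ∈ W := by
  classical
  choose ci ck hck hc using P.cover
  have hinj : Set.InjOn ci W := by
    intro x hx y hy hxy
    by_contra hne
    have hle : x ≤ y ∨ y ≤ x := by
      rcases le_total (ck x) (ck y) with h | h
      · left
        calc x = P.c (ci x) (ck x) := (hc x).symm
          _ ≤ P.c (ci x) (ck y) := CP.mono_le P (ci x) h (hxy ▸ hck y)
          _ = y := by rw [hxy, hc y]
      · right
        calc y = P.c (ci y) (ck y) := (hc y).symm
          _ ≤ P.c (ci y) (ck x) := CP.mono_le P (ci y) h (hxy ▸ hck x)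
          _ = x := by rw [← hxy, hc x]
    have hinc := hW x hx y hy hne
    rcases hle with h | h
    · exact hinc.2.1 (lt_of_le_of_ne h hne)
    · exact hinc.2.2 (lt_of_le_of_ne h (Ne.symm hne))
  have himg : Finset.image ci W = Finset.univ := by
    apply Finset.eq_univ_of_card
    rw [Finset.card_image_of_injOn hinj, hcard, Fintype.card_fin]
  have hj : j ∈ Finset.image ci W := by rw [himg]; exact Finset.mem_univ j
  obtain ⟨x, hx, hxj⟩ := Finset.mem_image.mp hj
  exact ⟨ck x, hxj ▸ hck x, by rw [← hxj, hc x]; exact hx⟩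

lemma CP.extend_elt (hWE : WidthExtensible α) (hw : posetWidth α = n)
    {A : Finset α} (hA : IsAC A) (j : Fin n) :
    ∃ r, r ≤ P.m j ∧ ∀ a ∈ A, P.c j r = a ∨ Incomp (P.c j r) a := by
  obtain ⟨W, ⟨hWac, hWcard⟩, hAW⟩ := hWE A hA
  obtain ⟨r, hr, hrW⟩ := CP.widthAC_chain P hWac (hWcard.trans hw) j
  refine ⟨r, hr, fun a ha => ?_⟩
  by_cases h : P.c j r = a
  · exact Or.inl h
  · exact Or.inr (hWac _ hrW a (hAW ha) h)

lemma CP.singleton_AC (x : α) : IsAC ({x} : Finset α) := by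
  intro a ha b hb hab
  rw [Finset.mem_singleton] at ha hb
  exact absurd (ha.trans hb.symm) hab

lemma CP.fwd_no0 (hWE : WidthExtensible α) (hw : posetWidth α = n)
    (i j : Fin n) (hij : i ≠ j) : ¬ P.c j 0 < P.c i 0 := by
  intro hlt
  obtain ⟨r, hr, h⟩ := CP.extend_elt P hWE hw (CP.singleton_AC (P.c j 0)) i
  rcases h _ (Finset.mem_singleton_self _) with heq | hinc
  · exact P.disj i j hij r 0 hr (Nat.zero_le _) heq
  · exact hinc.2.2 (lt_of_lt_of_le hlt (CP.mono_le P i (Nat.zero_le r) hr))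

lemma CP.fwd_noM (hWE : WidthExtensible α) (hw : posetWidth α = n)
    (i j : Fin n) (hij : i ≠ j) : ¬ P.c j (P.m j) < P.c i (P.m i) := by
  intro hlt
  obtain ⟨r, hr, h⟩ := CP.extend_elt P hWE hw (CP.singleton_AC (P.c i (P.m i))) j
  rcases h _ (Finset.mem_singleton_self _) with heq | hinc
  · exact P.disj j i hij.symm r (P.m i) hr le_rfl heq
  · exact hinc.2.1 (lt_of_le_of_lt (CP.mono_le P j hr le_rfl) hlt)

lemma CP.fwd_psi (hWE : WidthExtensible α) (hw : posetWidth α = n)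
    (i j : Fin n) (hij : i ≠ j) {s t : ℕ} (ht : 1 ≤ t) (hs : s ≤ P.m i)
    (htm : t ≤ P.m j) (h1 : P.c i s < P.c j t) : ¬ P.c j (t - 1) < P.c i s := by
  intro h2
  obtain ⟨r, hr, h⟩ := CP.extend_elt P hWE hw (CP.singleton_AC (P.c i s)) j
  rcases h _ (Finset.mem_singleton_self _) with heq | hinc
  · exact P.disj j i hij.symm r s hr hs heq
  · rcases le_or_gt r (t - 1) with hle | hgt
    · exact hinc.2.1
        (lt_of_le_of_lt (CP.mono_le P j hle (le_trans (Nat.sub_le t 1) htm)) h2)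
    · have : t ≤ r := by omega
      exact hinc.2.2 (lt_of_lt_of_le h1 (CP.mono_le P j this hr))

lemma CP.fwd_om3 (hWE : WidthExtensible α) (hw : posetWidth α = n) : P.Om3 := by
  intro i j k hij hjk s t u ht hs htm hu h1 h2
  by_contra hne
  by_cases hc : P.c k u < P.c i s ∨ P.c k u = P.c i s
  · have h3 : P.c j (t - 1) < P.c i s := by
      rcases hc with h | h
      · exact h2.trans h
      · exact h ▸ h2
    exact CP.fwd_psi P hWE hw i j hij ht hs htm h1 h3
  · push_neg at hc
    have hincAC : Incomp (P.c i s) (P.c k u) := ⟨fun h => hc.2 h.symm, hne, hc.1⟩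
    have hmem1 : P.c i s ∈ ({P.c i s, P.c k u} : Finset α) := Finset.mem_insert_self _ _
    have hmem2 : P.c k u ∈ ({P.c i s, P.c k u} : Finset α) :=
      Finset.mem_insert_of_mem (Finset.mem_singleton_self _)
    have hAC : IsAC ({P.c i s, P.c k u} : Finset α) := by
      intro x hx y hy hxy
      rw [Finset.mem_insert, Finset.mem_singleton] at hx hy
      rcases hx with rfl | rfl <;> rcases hy with rfl | rfl
      · exact absurd rfl hxy
      · exact hincAC
      · exact CP.incomp_symm hincAC
      · exact absurd rfl hxy
    obtain ⟨r, hr, h⟩ := CP.extend_elt P hWE hw hAC j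
    have hinc1 : Incomp (P.c j r) (P.c i s) := by
      rcases h _ hmem1 with heq | hinc
      · exact absurd heq (P.disj j i hij.symm r s hr hs)
      · exact hinc
    have hinc2 : Incomp (P.c j r) (P.c k u) := by
      rcases h _ hmem2 with heq | hinc
      · exact absurd heq (P.disj j k hjk r u hr hu)
      · exact hinc
    rcases le_or_gt r (t - 1) with hle | hgt
    · exact hinc2.2.1
        (lt_of_le_of_lt (CP.mono_le P j hle (le_trans (Nat.sub_le t 1) htm)) h2)
    · have : t ≤ r := by omega
      exact hinc1.2.2 (lt_of_lt_of_le h1 (CP.mono_le P j this hr))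

lemma CP.backward (h1 : P.Om1) (h2 : P.Om2) (h3 : P.Om3) (hw : posetWidth α = n) :
    WidthExtensible α := by
  classical
  intro A hA
  choose ci ck hck hc using P.cover
  -- the top of each chain is not strictly below any element of A
  have hQtop : ∀ j : Fin n, ∀ a ∈ A, ¬ P.c j (P.m j) < a := by
    intro j a ha hlt
    have hlt' : P.c j (P.m j) < P.c (ci a) (ck a) := by rw [hc]; exact hlt
    by_cases hji : ci a = j
    · rw [hji] at hlt'
      exact absurd hlt' (not_lt_of_ge (CP.mono_le P j (hji ▸ hck a) le_rfl))
    · have := lt_of_lt_of_le hlt' (CP.mono_le P (ci a) (hck a) le_rfl)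
      exact (h2 j (ci a) (fun h => hji h.symm)).2.1 this
  have hQex : ∀ j : Fin n, ∃ r : ℕ, ∀ a ∈ A, ¬ P.c j r < a :=
    fun j => ⟨P.m j, hQtop j⟩
  let r : Fin n → ℕ := fun j => Nat.find (hQex j)
  have hrspec : ∀ j, ∀ a ∈ A, ¬ P.c j (r j) < a := fun j => Nat.find_spec (hQex j)
  have hrle : ∀ j, r j ≤ P.m j := fun j => Nat.find_le (hQtop j)
  have hrmin : ∀ j, 1 ≤ r j → ∃ a ∈ A, P.c j (r j - 1) < a := by
    intro j hj
    have hmin := Nat.find_min (hQex j) (show r j - 1 < r j from Nat.sub_lt hj one_pos)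
    push_neg at hmin
    exact hmin
  -- elements of A are the chosen elements on their own chains
  have hfix : ∀ a ∈ A, r (ci a) = ck a ∧ P.c (ci a) (r (ci a)) = a := by
    intro a ha
    have hQa : ∀ a' ∈ A, ¬ P.c (ci a) (ck a) < a' := by
      intro a' ha' hlt
      rw [hc a] at hlt
      by_cases he : a = a'
      · exact absurd hlt (he ▸ lt_irrefl a)
      · exact (hA a ha a' ha' he).2.1 hlt
    have hle : r (ci a) ≤ ck a := Nat.find_le hQa
    have hge : ¬ r (ci a) < ck a := by
      intro hlt
      have : P.c (ci a) (r (ci a)) < a :=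
        lt_of_lt_of_eq (P.mono (ci a) _ _ hlt (hck a)) (hc a)
      exact hrspec (ci a) a ha this
    have heq : r (ci a) = ck a := le_antisymm hle (not_lt.mp hge)
    exact ⟨heq, by rw [heq, hc a]⟩
  -- the chosen elements are not above any element of A
  have habove : ∀ j, ∀ a ∈ A, ¬ a < P.c j (r j) := by
    intro j a ha hlt
    by_cases hji : ci a = j
    · rw [← (hfix a ha).2, hji] at hlt; exact lt_irrefl _ hlt
    · rcases Nat.eq_zero_or_pos (r j) with h0 | hpos
      · rw [h0] at hlt
        have h0a : P.c (ci a) 0 ≤ a :=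
          le_of_le_of_eq (CP.mono_le P (ci a) (Nat.zero_le _) (hck a)) (hc a)
        have : P.c (ci a) 0 < P.c j 0 := lt_of_le_of_lt h0a hlt
        exact (h1 (ci a) j hji).2.1 this
      · obtain ⟨a', ha', hlt'⟩ := hrmin j hpos
        by_cases hkj : ci a' = j
        · have haa : a < a' := by rw [← (hfix a' ha').2, hkj]; exact hlt
          exact (hA a ha a' ha' (ne_of_lt haa)).2.1 haa
        · have hlt2 : P.c j (r j - 1) < P.c (ci a') (ck a') := by rw [hc a']; exact hlt'
          have hlta : P.c (ci a) (ck a) < P.c j (r j) := by rw [hc a]; exact hlt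
          have := h3 (ci a) j (ci a') hji (fun h => hkj h.symm) (ck a) (r j) (ck a')
            hpos (hck a) (hrle j) (hck a') hlta hlt2
          rw [hc a, hc a'] at this
          exact (hA a ha a' ha' (ne_of_lt this)).2.1 this
  -- the chosen elements are pairwise incomparable
  have hpair : ∀ i j : Fin n, i ≠ j → ¬ P.c i (r i) < P.c j (r j) := by
    intro i j hij hlt
    rcases Nat.eq_zero_or_pos (r j) with h0 | hpos
    · rw [h0] at hlt
      have : P.c i 0 < P.c j 0 :=
        lt_of_le_of_lt (CP.mono_le P i (Nat.zero_le _) (hrle i)) hlt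
      exact (h1 i j hij).2.1 this
    · obtain ⟨a', ha', hlt'⟩ := hrmin j hpos
      by_cases hkj : ci a' = j
      · have : P.c i (r i) < a' := by rw [← (hfix a' ha').2, hkj]; exact hlt
        exact hrspec i a' ha' this
      · have hlt2 : P.c j (r j - 1) < P.c (ci a') (ck a') := by rw [hc a']; exact hlt'
        have := h3 i j (ci a') hij (fun h => hkj h.symm) (r i) (r j) (ck a')
          hpos (hrle i) (hrle j) (hck a') hlt hlt2
        rw [hc a'] at this
        exact hrspec i a' ha' this
  -- assemble the width antichain
  refine ⟨Finset.image (fun j => P.c j (r j)) Finset.univ, ⟨?_, ?_⟩, ?_⟩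
  · intro x hx y hy hxy
    obtain ⟨i, -, rfl⟩ := Finset.mem_image.mp hx
    obtain ⟨j, -, rfl⟩ := Finset.mem_image.mp hy
    have hij : i ≠ j := fun h => hxy (by rw [h])
    exact ⟨hxy, hpair i j hij, hpair j i hij.symm⟩
  · have hinj : Set.InjOn (fun j => P.c j (r j)) (Finset.univ : Finset (Fin n)) := by
      intro i _ j _ h
      by_contra hij
      exact P.disj i j hij (r i) (r j) (hrle i) (hrle j) h
    rw [Finset.card_image_of_injOn hinj, Finset.card_univ, Fintype.card_fin, hw]
  · intro a ha
    exact Finset.mem_image.mpr ⟨ci a, Finset.mem_univ _, (hfix a ha).2⟩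

end Aux

/-- For a chain partition into `width` many chains,
width-extensibility is equivalent to ω₁ ∧ ω₂ ∧ ω₃. -/
theorem widthExtensible_iff_omegas {α : Type*} [PartialOrder α] [Fintype α]
    {n : ℕ} (P : ChainPartition α n) (hw : posetWidth α = n) :
    WidthExtensible α ↔ (P.Om1 ∧ P.Om2 ∧ P.Om3) := by
  constructor
  · intro hWE
    refine ⟨?_, ?_, CP.fwd_om3 P hWE hw⟩
    · intro i j hij
      exact ⟨P.disj i j hij 0 0 (Nat.zero_le _) (Nat.zero_le _),
        CP.fwd_no0 P hWE hw j i hij.symm, CP.fwd_no0 P hWE hw i j hij⟩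
    · intro i j hij
      exact ⟨P.disj i j hij (P.m i) (P.m j) le_rfl le_rfl,
        CP.fwd_noM P hWE hw j i hij.symm, CP.fwd_noM P hWE hw i j hij⟩
  · rintro ⟨h1, h2, h3⟩
    exact CP.backward P h1 h2 h3 hw
end

section
/- Let (S, <) be a finite poset with an indexed chain partition into n chains. Suppose there are chain indices i, j, k with i ≠ j and j ≠ k and indices s, t, u with 1 ≤ t such that [i,s] < [j,t], [j,t−1] < [k,u], and [k,u] < [i,s]. Then no antichain of S of cardinality n contains [i,s]. -/
open scoped Classical

/-- If `[i,s] < [j,t]`, `[j,t-1] < [k,u]` and `[k,u] < [i,s]`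
(with `i ≠ j`, `j ≠ k`, `1 ≤ t`), then no antichain of cardinality `n`
contains `[i,s]`. -/
theorem no_max_antichain_contains {α : Type*} [PartialOrder α] [Fintype α]
    {n : ℕ} (P : ChainPartition α n) {i j k : Fin n} (hij : i ≠ j) (hjk : j ≠ k)
    {s t u : ℕ} (ht1 : 1 ≤ t) (hs : s ≤ P.m i) (ht : t ≤ P.m j) (hu : u ≤ P.m k)
    (hab : P.c i s < P.c j t) (hbc : P.c j (t - 1) < P.c k u)
    (hca : P.c k u < P.c i s) :
    ∀ A : Finset α, IsAC A → A.card = n → P.c i s ∉ A := by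
  classical
  intro A hAC hcard hmem
  choose g v hv hcv using P.cover
  have hinj : Set.InjOn g A := by
    intro x hx y hy hgxy
    by_contra hne
    have hincomp := hAC x hx y hy hne
    rcases lt_trichotomy (v x) (v y) with h | h | h
    · exact hincomp.2.1 (by
        rw [← hcv x, ← hcv y, hgxy]
        exact P.mono _ _ _ h (hv y))
    · exact hne (by rw [← hcv x, ← hcv y, hgxy, h])
    · exact hincomp.2.2 (by
        rw [← hcv x, ← hcv y, hgxy]
        exact P.mono _ _ _ h (hgxy ▸ hv x))
  have himg : A.image g = Finset.univ := by
    apply Finset.eq_univ_of_card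
    rw [Finset.card_image_of_injOn hinj, hcard, Fintype.card_fin]
  obtain ⟨b, hbA, hgb⟩ := Finset.mem_image.mp (himg ▸ Finset.mem_univ j)
  have hbeq : P.c j (v b) = b := by rw [← hgb]; exact hcv b
  have hvb : v b ≤ P.m j := hgb ▸ hv b
  have hbne : b ≠ P.c i s := fun h =>
    P.disj j i hij.symm (v b) s hvb hs (by rw [hbeq, h])
  have hincomp := hAC b hbA (P.c i s) hmem hbne
  have hvt : v b < t := by
    by_contra h
    push_neg at h
    have hle : P.c j t ≤ P.c j (v b) := by
      rcases eq_or_lt_of_le h with h' | h'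
      · rw [h']
      · exact le_of_lt (P.mono j t (v b) h' hvb)
    exact hincomp.2.2 (lt_of_lt_of_le hab (hle.trans_eq hbeq))
  have hble : P.c j (v b) ≤ P.c j (t - 1) := by
    have hvb1 : v b ≤ t - 1 := by omega
    rcases eq_or_lt_of_le hvb1 with h' | h'
    · exact le_of_eq (congrArg (P.c j) h')
    · exact le_of_lt (P.mono j _ _ h' (le_trans (Nat.sub_le t 1) ht))
  exact hincomp.2.1 (hbeq ▸ lt_of_le_of_lt hble (hbc.trans hca))
end

section
/- Let (S, <) be a finite poset with an indexed chain partition into n chains. Suppose there are chain indices i, j, k with i ≠ j and j ≠ k and indices s, t, u with 1 ≤ t such that [i,s] < [j,t], [j,t−1] < [k,u], and [k,u] ∥ [i,s]. Then no antichain of S of cardinality n contains both [i,s] and [k,u]. -/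
open scoped Classical

/-- If `[i,s] < [j,t]`, `[j,t-1] < [k,u]` and `[k,u] ∥ [i,s]`
(with `i ≠ j`, `j ≠ k`, `1 ≤ t`), then no antichain of cardinality `n`
contains both `[i,s]` and `[k,u]`. -/
theorem no_max_antichain_contains_pair {α : Type*} [PartialOrder α] [Fintype α]
    {n : ℕ} (P : ChainPartition α n) {i j k : Fin n} (hij : i ≠ j) (hjk : j ≠ k)
    {s t u : ℕ} (ht1 : 1 ≤ t) (hs : s ≤ P.m i) (ht : t ≤ P.m j) (hu : u ≤ P.m k)
    (hab : P.c i s < P.c j t) (hbc : P.c j (t - 1) < P.c k u)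
    (hca : Incomp (P.c k u) (P.c i s)) :
    ∀ A : Finset α, IsAC A → A.card = n → ¬ (P.c i s ∈ A ∧ P.c k u ∈ A) := by
  intro A hA hcard hmem
  obtain ⟨ha, hc⟩ := hmem
  have hex : ∀ x : α, ∃ p : Fin n × ℕ, p.2 ≤ P.m p.1 ∧ P.c p.1 p.2 = x := by
    intro x
    obtain ⟨i', k', h1, h2⟩ := P.cover x
    exact ⟨⟨i', k'⟩, h1, h2⟩
  let f : α → Fin n × ℕ := fun x => (hex x).choose
  have hfm : ∀ x, (f x).2 ≤ P.m (f x).1 := fun x => (hex x).choose_spec.1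
  have hfe : ∀ x, P.c (f x).1 (f x).2 = x := fun x => (hex x).choose_spec.2
  -- distinct antichain elements lie on distinct chains
  have key : ∀ x ∈ A, ∀ y ∈ A, x ≠ y → (f x).1 ≠ (f y).1 := by
    intro x hx y hy hxy heq
    have hix := hA x hx y hy hxy
    have hne : (f x).2 ≠ (f y).2 := by
      intro h
      apply hxy
      rw [← hfe x, ← hfe y, heq, h]
    rcases lt_or_gt_of_ne hne with h | h
    · exact hix.2.1 (by
        rw [← hfe x, ← hfe y, heq]
        exact P.mono _ _ _ h (hfm y))
    · exact hix.2.2 (by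
        rw [← hfe x, ← hfe y, heq]
        exact P.mono _ _ _ h (heq ▸ hfm x))
  -- the map x ↦ chain index is injective on A, hence surjective onto Fin n
  let g : {x // x ∈ A} → Fin n := fun x => (f x.1).1
  have hginj : Function.Injective g := by
    intro x y h
    by_contra hxy
    exact key x.1 x.2 y.1 y.2 (fun e => hxy (Subtype.ext e)) h
  have hgsurj : Function.Surjective g := by
    have hcards : Fintype.card {x // x ∈ A} = Fintype.card (Fin n) := by
      simp [Fintype.card_coe, hcard]
    exact ((Fintype.bijective_iff_injective_and_card g).2 ⟨hginj, hcards⟩).2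
  obtain ⟨⟨x, hx⟩, hgx⟩ := hgsurj j
  set v := (f x).2 with hv
  have hvm : v ≤ P.m j := hgx ▸ hfm x
  have hxeq : P.c j v = x := by
    have := hfe x
    rwa [show (f x).1 = j from hgx] at this
  -- x is distinct from both [i,s] and [k,u]
  have hxa : x ≠ P.c i s := by
    rw [← hxeq]
    exact fun h => P.disj j i (Ne.symm hij) v s hvm hs h
  have hxc : x ≠ P.c k u := by
    rw [← hxeq]
    exact fun h => P.disj j k hjk v u hvm hu h
  by_cases hvt : t ≤ v
  · -- [i,s] < [j,t] ≤ [j,v] = x : contradicts antichain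
    have h1 : P.c j t ≤ P.c j v := by
      rcases eq_or_lt_of_le hvt with h | h
      · rw [h]
      · exact le_of_lt (P.mono j t v h hvm)
    have : P.c i s < x := hxeq ▸ lt_of_lt_of_le hab h1
    exact (hA x hx (P.c i s) ha hxa).2.2 this
  · -- x = [j,v] ≤ [j,t-1] < [k,u] : contradicts antichain
    push_neg at hvt
    have hvt1 : v ≤ t - 1 := Nat.le_sub_one_of_lt hvt
    have h1 : P.c j v ≤ P.c j (t - 1) := by
      rcases eq_or_lt_of_le hvt1 with h | h
      · rw [h]
      · exact le_of_lt (P.mono j v (t - 1) h (le_trans (Nat.sub_le t 1) ht))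
    have : x < P.c k u := hxeq ▸ lt_of_le_of_lt h1 hbc
    exact (hA x hx (P.c k u) hc hxc).2.1 this
end

section
/- Let (E, ≺) be a finite poset with an indexed chain partition into n disjoint chains, and let (S, <) be its ES-transform. Then the relation < on S is a strict partial order: it is irreflexive, asymmetric, and transitive. -/
open scoped Classical

/-- An *indexed chain partition* of a poset `E` into `n` disjoint chains:
numbers `m i ≥ 1` and maps `e i : {1,…,m i} → E` which are strictly
order-preserving (hence injective), have pairwise disjoint images, and
jointly cover `E`.  Write `(i,k)` for `e i k`. -/
structure EventCP (E : Type*) [PartialOrder E] (n : ℕ) where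
  m : Fin n → ℕ
  one_le_m : ∀ i : Fin n, 1 ≤ m i
  e : Fin n → ℕ → E
  mono : ∀ i : Fin n, ∀ k l : ℕ, 1 ≤ k → k < l → l ≤ m i → e i k < e i l
  disj : ∀ i j : Fin n, i ≠ j → ∀ k l : ℕ,
    1 ≤ k → k ≤ m i → 1 ≤ l → l ≤ m j → e i k ≠ e j l
  cover : ∀ x : E, ∃ i : Fin n, ∃ k : ℕ, 1 ≤ k ∧ k ≤ m i ∧ e i k = x

variable {E : Type*} [PartialOrder E] {n : ℕ}

/-- The state set of the ES-transform: `S = {[i,k] : 0 ≤ k ≤ m i}`, realized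
as the pairs `(i,k)` of `Fin n × ℕ` with `k ≤ m i`. -/
def EventCP.StateSet (P : EventCP E n) : Set (Fin n × ℕ) :=
  {p | p.2 ≤ P.m p.1}

/-- The ES-transform strict relation on states: `[i,r] < [j,s]` iff `r < s`
when `i = j`, and iff `r + 1 ≤ m i`, `1 ≤ s`, and `(i,r+1) ≺ (j,s)` in `E`
when `i ≠ j`. -/
def EventCP.slt (P : EventCP E n) (a b : Fin n × ℕ) : Prop :=
  if a.1 = b.1 then a.2 < b.2
  else a.2 + 1 ≤ P.m a.1 ∧ 1 ≤ b.2 ∧ P.e a.1 (a.2 + 1) < P.e b.1 b.2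

/-- Two states are *incomparable* in the ES-transform. -/
def EventCP.IncompS (P : EventCP E n) (a b : Fin n × ℕ) : Prop :=
  a ≠ b ∧ ¬ P.slt a b ∧ ¬ P.slt b a

/-- A finset of states is an *antichain* of the ES-transform `(S, <)`:
it consists of states and is pairwise incomparable. -/
def EventCP.IsACS (P : EventCP E n) (A : Finset (Fin n × ℕ)) : Prop :=
  ↑A ⊆ P.StateSet ∧ ∀ a ∈ A, ∀ b ∈ A, a ≠ b → P.IncompS a b

/-- The *width* of the ES-transform `(S, <)`: the maximum cardinality of an
antichain. -/
noncomputable def EventCP.widthS (P : EventCP E n) : ℕ :=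
  sSup {c : ℕ | ∃ A : Finset (Fin n × ℕ), P.IsACS A ∧ A.card = c}

/-- The ES-transform relation `<` is a strict partial order
on `S`: irreflexive, asymmetric, and transitive. -/
theorem ES_transform_strict_order (P : EventCP E n) [Fintype E] :
    (∀ a ∈ P.StateSet, ¬ P.slt a a) ∧
    (∀ a ∈ P.StateSet, ∀ b ∈ P.StateSet, P.slt a b → ¬ P.slt b a) ∧
    (∀ a ∈ P.StateSet, ∀ b ∈ P.StateSet, ∀ c ∈ P.StateSet,
        P.slt a b → P.slt b c → P.slt a c) := by
  have key : ∀ i : Fin n, ∀ k l : ℕ, 1 ≤ k → k ≤ l → l ≤ P.m i → P.e i k ≤ P.e i l := by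
    intro i k l hk hkl hl
    rcases eq_or_lt_of_le hkl with h | h
    · rw [h]
    · exact le_of_lt (P.mono i k l hk h hl)
  refine ⟨?_, ?_, ?_⟩
  · intro a _ h
    simp [EventCP.slt] at h
  · intro a _ b _ hab hba
    by_cases h : a.1 = b.1
    · simp only [EventCP.slt, h, if_pos, if_true] at hab hba
      omega
    · rw [EventCP.slt, if_neg h] at hab
      rw [EventCP.slt, if_neg (Ne.symm h)] at hba
      obtain ⟨h1, h2, h3⟩ := hab
      obtain ⟨h4, h5, h6⟩ := hba
      have k1 : P.e b.1 b.2 ≤ P.e b.1 (b.2 + 1) := key _ _ _ h2 (by omega) h4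
      have k2 : P.e a.1 a.2 ≤ P.e a.1 (a.2 + 1) := key _ _ _ h5 (by omega) h1
      exact absurd (lt_trans (lt_of_lt_of_le h3 k1) (lt_of_lt_of_le h6 k2))
        (lt_irrefl _)
  · intro a _ b hb c hc hab hbc
    by_cases h1 : a.1 = b.1 <;> by_cases h2 : b.1 = c.1
    · -- a1 = b1 = c1
      rw [EventCP.slt, if_pos h1] at hab
      rw [EventCP.slt, if_pos h2] at hbc
      rw [EventCP.slt, if_pos (h1.trans h2)]
      omega
    · -- a1 = b1 ≠ c1
      rw [EventCP.slt, if_pos h1] at hab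
      rw [EventCP.slt, if_neg h2] at hbc
      obtain ⟨g1, g2, g3⟩ := hbc
      rw [EventCP.slt, if_neg (h1 ▸ h2), h1]
      exact ⟨by omega, g2, lt_of_le_of_lt (key _ _ _ (by omega) (by omega) g1) g3⟩
    · -- a1 ≠ b1 = c1
      rw [EventCP.slt, if_neg h1] at hab
      rw [EventCP.slt, if_pos h2] at hbc
      obtain ⟨g1, g2, g3⟩ := hab
      have hc' : c.2 ≤ P.m c.1 := hc
      rw [EventCP.slt, if_neg (fun hh => h1 (hh.trans h2.symm))]
      refine ⟨g1, by omega, lt_of_lt_of_le g3 ?_⟩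
      have : P.e b.1 b.2 ≤ P.e b.1 c.2 := key _ _ _ g2 (by omega) (h2 ▸ hc')
      rw [← h2]
      exact this
    · -- a1 ≠ b1 ≠ c1
      rw [EventCP.slt, if_neg h1] at hab
      rw [EventCP.slt, if_neg h2] at hbc
      obtain ⟨g1, g2, g3⟩ := hab
      obtain ⟨g4, g5, g6⟩ := hbc
      have kb : P.e b.1 b.2 ≤ P.e b.1 (b.2 + 1) := key _ _ _ g2 (by omega) g4
      have chain : P.e a.1 (a.2 + 1) < P.e c.1 c.2 :=
        lt_of_lt_of_le g3 (le_of_lt (lt_of_le_of_lt kb g6))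
      by_cases h3 : a.1 = c.1
      · rw [EventCP.slt, if_pos h3]
        by_contra hcon
        push_neg at hcon
        have : P.e c.1 c.2 ≤ P.e a.1 (a.2 + 1) := by
          rw [← h3] at *
          exact key _ _ _ g5 (by omega) g1
        exact absurd (lt_of_lt_of_le chain this) (lt_irrefl _)
      · rw [EventCP.slt, if_neg h3]
        exact ⟨g1, g5, chain⟩
end

section
/- Let (E, ≺) be a finite poset with an indexed chain partition into n disjoint chains, and let (S, <) be its ES-transform. The map sending each lower set G of (E, ≺) to the set { [i, k_i] : 1 ≤ i ≤ n }, where k_i = |G ∩ image(e_i)|, is a bijection from the set of lower sets of (E, ≺) onto the set of antichains of cardinality n of (S, <). -/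
open scoped Classical

variable {E : Type*} [PartialOrder E] {n : ℕ}

/-- A finset of `E` is a *lower set* (down-set). -/
def IsLowerSetF {E : Type*} [PartialOrder E] (G : Finset E) : Prop :=
  ∀ f ∈ G, ∀ x : E, x < f → x ∈ G

/-- The map sending a lower set `G` of `E` to the state set
`{[i, kᵢ] : 1 ≤ i ≤ n}` where `kᵢ = |G ∩ image (e i)|`. -/
noncomputable def EventCP.cutMap (P : EventCP E n) (G : Finset E) :
    Finset (Fin n × ℕ) :=
  Finset.univ.image fun i : Fin n =>
    (i, (G.filter fun x => ∃ k : ℕ, 1 ≤ k ∧ k ≤ P.m i ∧ P.e i k = x).card)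

/-!
A lower set `G` meets each chain `i` in an initial segment `(i,1), …, (i,kᵢ)`, so it is
determined by its cut vector `k`. For `i ≠ j`, `[i,kᵢ] < [j,kⱼ]` says exactly that the first
element of chain `i` outside `G` lies below an element of chain `j` inside `G`; hence the states
`[i,kᵢ]` are pairwise incomparable precisely when the union of the initial segments is a lower
set. Conversely an antichain of size `n` meets every chain of `S` once, since each chain of `S`
is totally ordered, so it is the set of states of a cut vector.
-/

theorem le_card_filter_Icc_iff {p : ℕ → Prop} [DecidablePred p] {N k : ℕ}
    (hp : AntitoneOn p (Set.Icc 1 N)) (hk : 1 ≤ k) (hkN : k ≤ N) :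
    k ≤ ((Finset.Icc 1 N).filter p).card ↔ p k := by
  constructor
  · intro hle
    by_contra hpk
    have hsub : (Finset.Icc 1 N).filter p ⊆ Finset.Icc 1 (k - 1) := by
      intro j hj
      simp only [Finset.mem_filter, Finset.mem_Icc] at hj ⊢
      refine ⟨hj.1.1, Nat.le_sub_one_of_lt (lt_of_not_ge fun hkj => hpk ?_)⟩
      exact hp ⟨hk, hkN⟩ hj.1 hkj hj.2
    have := Finset.card_le_card hsub
    simp only [Nat.card_Icc] at this
    omega
  · intro hpk
    have hsub : Finset.Icc 1 k ⊆ (Finset.Icc 1 N).filter p := by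
      intro j hj
      simp only [Finset.mem_filter, Finset.mem_Icc] at hj ⊢
      exact ⟨⟨hj.1, hj.2.trans hkN⟩, hp ⟨hj.1, hj.2.trans hkN⟩ ⟨hk, hkN⟩ hj.2 hpk⟩
    simpa using Finset.card_le_card hsub

namespace Finset

variable {ι α : Type*} [Fintype ι] [DecidableEq ι] [DecidableEq α]

def graph (k : ι → α) : Finset (ι × α) :=
  univ.image fun i => (i, k i)

theorem mem_graph {k : ι → α} {p : ι × α} : p ∈ graph k ↔ k p.1 = p.2 := by
  simp only [graph, mem_image, mem_univ, true_and]
  exact ⟨by rintro ⟨i, rfl⟩; rfl, fun h => ⟨p.1, Prod.ext rfl h⟩⟩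

theorem card_graph (k : ι → α) : (graph k).card = Fintype.card ι :=
  card_image_of_injective _ fun _ _ h => (Prod.ext_iff.1 h).1

theorem graph_injective : Function.Injective (graph : (ι → α) → Finset (ι × α)) :=
  fun k k' h => funext fun i =>
    (mem_graph.1 (h ▸ mem_graph.2 rfl : (i, k i) ∈ graph k')).symm

theorem exists_eq_graph {A : Finset (ι × α)} (hA : Set.InjOn Prod.fst (A : Set (ι × α)))
    (hcard : A.card = Fintype.card ι) : ∃ k : ι → α, A = graph k := by
  have himg : A.image Prod.fst = univ :=
    eq_univ_of_card _ (by rw [card_image_of_injOn hA, hcard])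
  have hfib : ∀ i, ∃ p ∈ A, p.1 = i := fun i =>
    mem_image.1 (himg ▸ mem_univ i)
  choose p hpA hp using hfib
  refine ⟨fun i => (p i).2, (eq_of_subset_of_card_le ?_ ?_).symm⟩
  · intro q hq
    rw [mem_graph] at hq
    obtain ⟨i, l⟩ := q
    rw [← show p i = (i, l) from Prod.ext (hp i) hq]
    exact hpA i
  · rw [hcard, card_graph]

end Finset

theorem IsLowerSetF.mem_of_le {G : Finset E} (hG : IsLowerSetF G) {x y : E} (hxy : x ≤ y)
    (hy : y ∈ G) : x ∈ G := by
  rcases hxy.eq_or_lt with rfl | hlt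
  exacts [hy, hG y hy x hlt]

namespace EventCP

variable (P : EventCP E n)

theorem e_le_e {i : Fin n} {k l : ℕ} (hk : 1 ≤ k) (hkl : k ≤ l) (hl : l ≤ P.m i) :
    P.e i k ≤ P.e i l := by
  rcases hkl.eq_or_lt with rfl | hlt
  exacts [le_rfl, (P.mono i k l hk hlt hl).le]

theorem e_lt_e_iff {i : Fin n} {k l : ℕ} (hk : 1 ≤ k) (hl : 1 ≤ l) (hkm : k ≤ P.m i)
    (hlm : l ≤ P.m i) : P.e i k < P.e i l ↔ k < l :=
  ⟨fun h => lt_of_not_ge fun hlk => (P.e_le_e hl hlk hkm).not_gt h, fun h => P.mono i k l hk h hlm⟩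

theorem e_injOn (i : Fin n) : Set.InjOn (P.e i) (Set.Icc 1 (P.m i)) := by
  intro k hk l hl h
  by_contra hne
  rcases Nat.lt_or_gt_of_ne hne with hlt | hlt
  · exact (P.mono i k l hk.1 hlt hl.2).ne h
  · exact (P.mono i l k hl.1 hlt hk.2).ne h.symm

theorem slt_mk_mk_same_iff {i : Fin n} {r s : ℕ} : P.slt (i, r) (i, s) ↔ r < s := by
  rw [slt, if_pos rfl]

theorem slt_mk_mk_iff_of_ne {i j : Fin n} (hij : i ≠ j) {r s : ℕ} :
    P.slt (i, r) (j, s) ↔ r + 1 ≤ P.m i ∧ 1 ≤ s ∧ P.e i (r + 1) < P.e j s := by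
  rw [slt, if_neg hij]

noncomputable def cutVector (G : Finset E) (i : Fin n) : ℕ :=
  (G.filter fun x => ∃ k : ℕ, 1 ≤ k ∧ k ≤ P.m i ∧ P.e i k = x).card

theorem cutMap_eq_graph (G : Finset E) : P.cutMap G = Finset.graph (P.cutVector G) := rfl

theorem cutVector_eq_card_filter (G : Finset E) (i : Fin n) :
    P.cutVector G i = ((Finset.Icc 1 (P.m i)).filter fun k => P.e i k ∈ G).card := by
  have himage : (G.filter fun x => ∃ k : ℕ, 1 ≤ k ∧ k ≤ P.m i ∧ P.e i k = x)
      = ((Finset.Icc 1 (P.m i)).filter fun k => P.e i k ∈ G).image (P.e i) := by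
    ext x
    simp only [Finset.mem_filter, Finset.mem_image, Finset.mem_Icc]
    constructor
    · rintro ⟨hx, k, hk, hkm, rfl⟩
      exact ⟨k, ⟨⟨hk, hkm⟩, hx⟩, rfl⟩
    · rintro ⟨k, ⟨⟨hk, hkm⟩, hx⟩, rfl⟩
      exact ⟨hx, k, hk, hkm, rfl⟩
  rw [cutVector, himage, Finset.card_image_of_injOn]
  exact (P.e_injOn i).mono fun k hk => by simpa using (Finset.mem_filter.1 hk).1

theorem cutVector_le_m (G : Finset E) (i : Fin n) : P.cutVector G i ≤ P.m i := by
  rw [cutVector_eq_card_filter]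
  simpa using Finset.card_filter_le (Finset.Icc 1 (P.m i)) _

theorem e_mem_iff_le_cutVector {G : Finset E} (hG : IsLowerSetF G) {i : Fin n} {k : ℕ} (hk : 1 ≤ k)
    (hkm : k ≤ P.m i) : P.e i k ∈ G ↔ k ≤ P.cutVector G i := by
  rw [cutVector_eq_card_filter, le_card_filter_Icc_iff _ hk hkm]
  exact fun a ha b hb hab hbG => hG.mem_of_le (P.e_le_e ha.1 hab hb.2) hbG

theorem eq_of_cutVector_eq {G G' : Finset E} (hG : IsLowerSetF G) (hG' : IsLowerSetF G')
    (h : P.cutVector G = P.cutVector G') : G = G' := by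
  ext x
  obtain ⟨i, k, hk, hkm, rfl⟩ := P.cover x
  rw [P.e_mem_iff_le_cutVector hG hk hkm, P.e_mem_iff_le_cutVector hG' hk hkm, h]

def IsCut (k : Fin n → ℕ) : Prop :=
  (∀ i, k i ≤ P.m i) ∧ Pairwise fun i j => ¬ P.slt (i, k i) (j, k j)

theorem isACS_graph_iff (k : Fin n → ℕ) : P.IsACS (Finset.graph k) ↔ P.IsCut k := by
  simp only [IsACS, IsCut, IncompS, Finset.graph, Finset.coe_image, Set.image_subset_iff,
    Finset.forall_mem_image]
  refine and_congr (by simp [Set.subset_def, StateSet])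
    ⟨fun h i j hij => ?_, fun h i _ j _ hne => ?_⟩
  · exact (h (Finset.mem_univ i) (Finset.mem_univ j) fun he => hij (Prod.ext_iff.1 he).1).2.1
  · have hij : i ≠ j := fun he => hne (by rw [he])
    exact ⟨hne, h hij, h hij.symm⟩

theorem fst_injOn_of_isACS {A : Finset (Fin n × ℕ)} (hA : P.IsACS A) :
    Set.InjOn Prod.fst (A : Set (Fin n × ℕ)) := by
  intro a ha b hb hab
  by_contra hne
  obtain ⟨-, hnab, hnba⟩ := hA.2 a ha b hb hne
  obtain ⟨i, r⟩ := a
  obtain ⟨j, s⟩ := b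
  obtain rfl : i = j := hab
  rw [slt_mk_mk_same_iff] at hnab hnba
  exact hne (Prod.ext rfl (by omega))

theorem isCut_cutVector {G : Finset E} (hG : IsLowerSetF G) : P.IsCut (P.cutVector G) := by
  refine ⟨P.cutVector_le_m G, fun i j hij hslt => ?_⟩
  obtain ⟨hi, hj, hlt⟩ := (P.slt_mk_mk_iff_of_ne hij).1 hslt
  have hjG : P.e j (P.cutVector G j) ∈ G :=
    (P.e_mem_iff_le_cutVector hG hj (P.cutVector_le_m G j)).2 le_rfl
  have := (P.e_mem_iff_le_cutVector hG (Nat.le_add_left 1 _) hi).1 (hG _ hjG _ hlt)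
  omega

noncomputable def lowerSetOfCut (k : Fin n → ℕ) : Finset E :=
  Finset.univ.biUnion fun i => (Finset.Icc 1 (k i)).image (P.e i)

theorem e_mem_lowerSetOfCut_iff {k : Fin n → ℕ} (hk : ∀ i, k i ≤ P.m i) {i : Fin n} {l : ℕ}
    (hl : 1 ≤ l) (hlm : l ≤ P.m i) : P.e i l ∈ P.lowerSetOfCut k ↔ l ≤ k i := by
  simp only [lowerSetOfCut, Finset.mem_biUnion, Finset.mem_univ, true_and, Finset.mem_image,
    Finset.mem_Icc]
  constructor
  · rintro ⟨j, l', ⟨hl', hl'k⟩, heq⟩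
    obtain rfl : j = i := by
      by_contra hji
      exact P.disj j i hji l' l hl' (hl'k.trans (hk j)) hl hlm heq
    obtain rfl : l' = l := P.e_injOn j ⟨hl', hl'k.trans (hk j)⟩ ⟨hl, hlm⟩ heq
    exact hl'k
  · exact fun hlk => ⟨i, l, ⟨hl, hlk⟩, rfl⟩

theorem isLowerSetF_lowerSetOfCut {k : Fin n → ℕ} (hk : P.IsCut k) :
    IsLowerSetF (P.lowerSetOfCut k) := by
  intro f hf x hxf
  simp only [lowerSetOfCut, Finset.mem_biUnion, Finset.mem_univ, true_and, Finset.mem_image,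
    Finset.mem_Icc] at hf
  obtain ⟨j, l, ⟨hl, hlk⟩, rfl⟩ := hf
  obtain ⟨i, r, hr, hrm, rfl⟩ := P.cover x
  rw [P.e_mem_lowerSetOfCut_iff hk.1 hr hrm]
  by_cases hij : i = j
  · subst hij
    exact ((P.e_lt_e_iff hr hl hrm (hlk.trans (hk.1 i))).1 hxf).le.trans hlk
  · refine not_lt.1 fun hlt => hk.2 hij
      ((P.slt_mk_mk_iff_of_ne hij).2 ⟨hlt.trans_le hrm, hl.trans hlk, ?_⟩)
    calc P.e i (k i + 1) ≤ P.e i r := P.e_le_e (Nat.le_add_left 1 _) hlt hrm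
      _ < P.e j l := hxf
      _ ≤ P.e j (k j) := P.e_le_e hl hlk (hk.1 j)

theorem cutVector_lowerSetOfCut {k : Fin n → ℕ} (hk : P.IsCut k) :
    P.cutVector (P.lowerSetOfCut k) = k := by
  funext i
  have hiff : ∀ l, 1 ≤ l → l ≤ P.m i → (l ≤ P.cutVector (P.lowerSetOfCut k) i ↔ l ≤ k i) :=
    fun l hl hlm => (P.e_mem_iff_le_cutVector (P.isLowerSetF_lowerSetOfCut hk) hl hlm).symm.trans
      (P.e_mem_lowerSetOfCut_iff hk.1 hl hlm)
  have := P.cutVector_le_m (P.lowerSetOfCut k) i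
  have := hk.1 i
  refine le_antisymm (not_lt.1 fun hlt => ?_) (not_lt.1 fun hlt => ?_)
  · have := (hiff (k i + 1) (by omega) (by omega)).1 hlt
    omega
  · have := (hiff (P.cutVector (P.lowerSetOfCut k) i + 1) (by omega) (by omega)).2 hlt
    omega

end EventCP

theorem ES_transform_cut_bijection_general (P : EventCP E n) :
    Set.BijOn P.cutMap {G : Finset E | IsLowerSetF G}
      {A : Finset (Fin n × ℕ) | P.IsACS A ∧ A.card = n} := by
  refine ⟨fun G hG => ?_, fun G hG G' hG' h => ?_, fun A ⟨hA, hcard⟩ => ?_⟩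
  · change P.IsACS _ ∧ _
    rw [P.cutMap_eq_graph, P.isACS_graph_iff, Finset.card_graph, Fintype.card_fin]
    exact ⟨P.isCut_cutVector hG, rfl⟩
  · exact P.eq_of_cutVector_eq hG hG' (Finset.graph_injective h)
  · obtain ⟨k, rfl⟩ := Finset.exists_eq_graph (P.fst_injOn_of_isACS hA)
      (hcard.trans (Fintype.card_fin n).symm)
    have hk := (P.isACS_graph_iff k).1 hA
    exact ⟨P.lowerSetOfCut k, P.isLowerSetF_lowerSetOfCut hk,
      by rw [P.cutMap_eq_graph, P.cutVector_lowerSetOfCut hk]⟩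

/-- `cutMap` is a bijection from the lower sets of `(E, ≺)`
onto the antichains of cardinality `n` of the ES-transform `(S, <)`. -/
theorem ES_transform_cut_bijection (P : EventCP E n) [Fintype E] :
    Set.BijOn P.cutMap {G : Finset E | IsLowerSetF G}
      {A : Finset (Fin n × ℕ) | P.IsACS A ∧ A.card = n} :=
  ES_transform_cut_bijection_general P
end
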